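/- For any 2×2 nonnegative matrix M = [[a,b],[c,d]] with all entries positive, d_∞(M) ≤ d_H(M), i.e. |a/(a+c) - b/(b+d)| ≤ |log(ad/(bc))|. -/

import Mathlib

/-! In the coordinates `x = a / c`, `y = b / d` the theorem compares `x / (x + 1) - y / (y + 1)`
with `log (x / y)`. For `y ≤ x` the former equals `(x - y) / ((x + 1) * (y + 1))`, which is at most
`(x - y) / x = 1 - (x / y)⁻¹ ≤ log (x / y)`; the other order follows by symmetry. -/

open Real

lemma div_div_add_one {a c : ℝ} (hc : c ≠ 0) : a / c / (a / c + 1) = a / (a + c) := by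
  rw [div_add_one hc, div_div_div_cancel_right₀ hc]

lemma div_add_one_sub_div_add_one {x y : ℝ} (hx : x + 1 ≠ 0) (hy : y + 1 ≠ 0) :
    x / (x + 1) - y / (y + 1) = (x - y) / ((x + 1) * (y + 1)) := by
  field_simp
  ring

lemma div_add_one_sub_div_add_one_le_log_div {x y : ℝ} (hy : 0 < y) (hyx : y ≤ x) :
    x / (x + 1) - y / (y + 1) ≤ log (x / y) := by
  have hx : 0 < x := hy.trans_le hyx
  calc x / (x + 1) - y / (y + 1) = (x - y) / ((x + 1) * (y + 1)) :=
        div_add_one_sub_div_add_one (by positivity) (by positivity)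
    _ ≤ (x - y) / x := div_le_div_of_nonneg_left (sub_nonneg.2 hyx) hx (by nlinarith)
    _ = 1 - (x / y)⁻¹ := by field_simp
    _ ≤ log (x / y) := one_sub_inv_le_log_of_pos (div_pos hx hy)

lemma div_add_one_sub_div_add_one_le_abs_log_div {x y : ℝ} (hx : 0 < x) (hy : 0 < y) :
    x / (x + 1) - y / (y + 1) ≤ |log (x / y)| := by
  rcases le_total y x with hyx | hxy
  · exact (div_add_one_sub_div_add_one_le_log_div hy hyx).trans (le_abs_self _)
  · have hnonpos : x / (x + 1) - y / (y + 1) ≤ 0 := by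
      rw [div_add_one_sub_div_add_one (by positivity) (by positivity)]
      exact div_nonpos_of_nonpos_of_nonneg (sub_nonpos.2 hxy) (by positivity)
    exact hnonpos.trans (abs_nonneg _)

lemma abs_div_add_one_sub_div_add_one_le_abs_log_div {x y : ℝ} (hx : 0 < x) (hy : 0 < y) :
    |x / (x + 1) - y / (y + 1)| ≤ |log (x / y)| := by
  refine abs_sub_le_iff.2 ⟨div_add_one_sub_div_add_one_le_abs_log_div hx hy, ?_⟩
  rw [← abs_neg, ← log_inv, inv_div]
  exact div_add_one_sub_div_add_one_le_abs_log_div hy hx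

theorem dinf_le_dH (a b c d : ℝ)
    (ha : 0 < a) (hb : 0 < b) (hc : 0 < c) (hd : 0 < d) :
    |a / (a + c) - b / (b + d)| ≤ |Real.log (a * d / (b * c))| := by
  have hratio : a * d / (b * c) = a / c / (b / d) := by
    field_simp
  rw [← div_div_add_one hc.ne', ← div_div_add_one hd.ne', hratio]
  exact abs_div_add_one_sub_div_add_one_le_abs_log_div (div_pos ha hc) (div_pos hb hd)
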